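/- Under the hypotheses of the discrete maximum principle (u : Ω ∪ δΩ → ℝ with -Δu + cu ≥ 0 on connected Ω, u ≥ 0 on δΩ, liminf at infinity ≥ 0, c ≥ 0), either u ≡ 0 on Ω or u > 0 on Ω. -/

import Mathlib

/-!
If `u` is negative somewhere, the liminf condition confines the search for its infimum over
`Ω` to a finite ball, so the infimum `m < 0` is attained. At a point where `u = m ≤ 0`, the
inequality `Δu ≤ c u ≤ 0` together with `u ≥ m` at the neighbours forces `u = m` at every
neighbour, and connectedness of `Ω` spreads this to all of `Ω` and its boundary. A constant
`m < 0` contradicts either `u ≥ 0` on a nonempty boundary or, for infinite `Ω`, the liminf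
condition. Hence `u ≥ 0`, and the same propagation with `m = 0` shows that a single zero of `u`
in `Ω` forces `u ≡ 0`.
-/

open SimpleGraph

namespace SimpleGraph

variable {V : Type*} {G : SimpleGraph V}

theorem Preconnected.forall_mem_of_adj_closed {s : Set V} (hs : (G.induce s).Preconnected)
    {p : V → Prop} (hstep : ∀ x ∈ s, ∀ y ∈ s, G.Adj x y → p x → p y)
    {a : V} (ha : a ∈ s) (hpa : p a) : ∀ x ∈ s, p x := by
  suffices h : ∀ t : s, p t from fun x hx => h ⟨x, hx⟩
  intro t
  induction (reachable_iff_reflTransGen _ _).mp (hs ⟨a, ha⟩ t) with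
  | refl => exact hpa
  | tail _ hyz ih => exact hstep _ (Subtype.prop _) _ (Subtype.prop _) hyz ih

variable [∀ v : V, Fintype (G.neighborSet v)]

theorem Connected.finite_setOf_dist_le (hconn : G.Connected) (x₀ : V) (N : ℕ) :
    {x | G.dist x₀ x ≤ N}.Finite := by
  simp_rw [dist_comm (u := x₀)]
  induction N with
  | zero =>
    exact (Set.finite_singleton x₀).subset fun x hx =>
      hconn.dist_eq_zero_iff.mp (Nat.le_zero.mp hx)
  | succ N ih =>
    refine ((Set.finite_singleton x₀).union
      (ih.biUnion fun y _ => (G.neighborSet y).toFinite)).subset fun x hx => ?_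
    obtain ⟨p, hp⟩ := hconn.exists_walk_length_eq_dist x x₀
    cases p with
    | nil => exact Or.inl rfl
    | cons hadj q =>
      refine Or.inr (Set.mem_biUnion ?_ hadj.symm)
      have := G.dist_le q
      simp only [Walk.length_cons] at hp
      simp only [Set.mem_ofPred_eq] at hx ⊢
      omega

theorem Connected.exists_le_dist_of_infinite (hconn : G.Connected) {s : Set V} (hs : s.Infinite)
    (x₀ : V) (N : ℕ) : ∃ x ∈ s, N ≤ G.dist x₀ x := by
  by_contra! h
  exact hs ((hconn.finite_setOf_dist_le x₀ N).subset fun x hx => (h x hx).le)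

theorem Connected.exists_isMinOn_of_liminf_nonneg (hconn : G.Connected) {Ω : Set V}
    {u : V → ℝ} {x₀ : V} (hliminf : ∀ ε : ℝ, 0 < ε → ∃ N : ℕ, ∀ x ∈ Ω, N ≤ G.dist x₀ x → -ε ≤ u x)
    {x : V} (hx : x ∈ Ω) (hux : u x < 0) : ∃ y ∈ Ω, IsMinOn u Ω y := by
  obtain ⟨N, hN⟩ := hliminf (-u x / 2) (by linarith)
  have hxN : G.dist x₀ x ≤ N := by
    by_contra! h
    linarith [hN x hx h.le]
  obtain ⟨y, ⟨hyΩ, -⟩, hy⟩ := Set.exists_min_image (Ω ∩ {x | G.dist x₀ x ≤ N}) u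
    ((hconn.finite_setOf_dist_le x₀ N).inter_of_right Ω) ⟨x, hx, hxN⟩
  refine ⟨y, hyΩ, isMinOn_iff.mpr fun w hw => ?_⟩
  by_cases hwN : G.dist x₀ w ≤ N
  · exact hy w ⟨hw, hwN⟩
  · linarith [hy x ⟨hx, hxN⟩, hN w hw (by omega)]

theorem adj_eq_of_superharmonic_of_le_adj {c u : V → ℝ} {z : V} (hcz : 0 ≤ c z) (huz : u z ≤ 0)
    (hsuper : 0 ≤ -(∑ y ∈ G.neighborFinset z, (u y - u z)) + c z * u z)
    (hmin : ∀ y, G.Adj z y → u z ≤ u y) {y : V} (hy : G.Adj z y) : u y = u z := by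
  have hterm : ∀ w ∈ G.neighborFinset z, 0 ≤ u w - u z := fun w hw =>
    sub_nonneg.mpr (hmin w ((G.mem_neighborFinset z w).mp hw))
  have hsum : ∑ w ∈ G.neighborFinset z, (u w - u z) = 0 :=
    le_antisymm (by linarith [mul_nonpos_of_nonneg_of_nonpos hcz huz]) (Finset.sum_nonneg hterm)
  have := (Finset.sum_eq_zero_iff_of_nonneg hterm).mp hsum y ((G.mem_neighborFinset z y).mpr hy)
  linarith

theorem eq_of_superharmonic_of_min_eq {Ω : Set V} (hΩ : (G.induce Ω).Connected)
    {c u : V → ℝ} {m : ℝ} (hm : m ≤ 0) (hc : ∀ x ∈ Ω, 0 ≤ c x)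
    (hsuper : ∀ x ∈ Ω, 0 ≤ -(∑ y ∈ G.neighborFinset x, (u y - u x)) + c x * u x)
    (hge : ∀ x ∈ Ω, ∀ y, G.Adj x y → m ≤ u y) {a : V} (ha : a ∈ Ω) (hua : u a = m) :
    ∀ x ∈ Ω, u x = m ∧ ∀ y, G.Adj x y → u y = m := by
  have hadj : ∀ x ∈ Ω, u x = m → ∀ y, G.Adj x y → u y = m := fun x hx hux y hxy =>
    (adj_eq_of_superharmonic_of_le_adj (hc x hx) (hux ▸ hm) (hsuper x hx)
      (fun w hw => hux ▸ hge x hx w hw) hxy).trans hux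
  have hΩm : ∀ x ∈ Ω, u x = m := hΩ.preconnected.forall_mem_of_adj_closed
    (fun x hx y _ hxy hux => hadj x hx hux y hxy) ha hua
  exact fun x hx => ⟨hΩm x hx, hadj x hx (hΩm x hx)⟩

end SimpleGraph

/-- Discrete maximum principle on a locally finite connected graph. -/
theorem discrete_strong_maximum_principle {V : Type*} (G : SimpleGraph V)
    [∀ v : V, Fintype (G.neighborSet v)]
    (hconn : G.Connected)
    (Ω : Set V)
    (hΩconn : (G.induce Ω).Connected)
    (bd : Set V)
    (hbd : bd = {y | y ∉ Ω ∧ ∃ x ∈ Ω, G.Adj x y})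
    (hne : bd.Nonempty ∨ Ω.Infinite)
    (c u : V → ℝ)
    (hc : ∀ x ∈ Ω, 0 ≤ c x)
    (heq : ∀ x ∈ Ω, 0 ≤ -(∑ y ∈ G.neighborFinset x, (u y - u x)) + c x * u x)
    (hb : ∀ y ∈ bd, 0 ≤ u y)
    (x₀ : V)
    (hliminf : ∀ ε : ℝ, 0 < ε → ∃ N : ℕ, ∀ x ∈ Ω, N ≤ G.dist x₀ x → -ε ≤ u x) :
    (∀ x ∈ Ω, u x = 0) ∨ (∀ x ∈ Ω, 0 < u x) := by
  have hadj : ∀ x ∈ Ω, ∀ y, G.Adj x y → y ∈ Ω ∨ y ∈ bd := fun x hx y hxy =>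
    (em (y ∈ Ω)).imp_right fun hy => hbd ▸ ⟨hy, x, hx, hxy⟩
  have hnonneg : ∀ x ∈ Ω, 0 ≤ u x := by
    by_contra! ⟨x, hx, hux⟩
    obtain ⟨y, hyΩ, hmin⟩ := hconn.exists_isMinOn_of_liminf_nonneg hliminf hx hux
    have hneg : u y < 0 := (isMinOn_iff.mp hmin x hx).trans_lt hux
    have hconst := eq_of_superharmonic_of_min_eq hΩconn hneg.le hc heq
      (fun x hx w hxw => (hadj x hx w hxw).elim (isMinOn_iff.mp hmin w)
        fun hw => (hneg.trans_le (hb w hw)).le) hyΩ rfl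
    rcases hne with ⟨b, hbbd⟩ | hinf
    · obtain ⟨-, x, hx, hxb⟩ := hbd ▸ hbbd
      linarith [hb b hbbd, (hconst x hx).2 b hxb]
    · obtain ⟨N, hN⟩ := hliminf (-u y / 2) (by linarith)
      obtain ⟨x, hx, hxN⟩ := hconn.exists_le_dist_of_infinite hinf x₀ N
      linarith [hN x hx hxN, (hconst x hx).1]
  by_cases hzero : ∃ x ∈ Ω, u x = 0
  · obtain ⟨a, ha, hua⟩ := hzero
    exact Or.inl fun x hx => (eq_of_superharmonic_of_min_eq hΩconn le_rfl hc heq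
      (fun x hx y hxy => (hadj x hx y hxy).elim (hnonneg y) (hb y)) ha hua x hx).1
  · push Not at hzero
    exact Or.inr fun x hx => (hnonneg x hx).lt_of_ne' (hzero x hx)
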